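/- Let D be a division ring with center C, σ a ring automorphism of D, F = C ∩ Fix(σ), m ≥ 2, a ∈ D, and let S_f be the algebra on D^m associated with f(t) = t^m − a ∈ D[t;σ]. If n ≥ 2 divides m and F contains a primitive n-th root of unity ω, then the map H_{id,ω} : Σ x_i t^i ↦ Σ x_i ω^i t^i is an F-automorphism of S_f, and the subgroup of Aut_F(S_f) it generates is cyclic of order n. -/
import Mathlib


open Finset

/-- The unit element `t^0` of `S_f`, in coordinates. -/
def cycOne (D : Type*) [Zero D] [One D] (m : ℕ) : Fin m → D :=
  fun k => if (k : ℕ) = 0 then 1 else 0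

/-- Coordinates of the product in the algebra `S_f`, `f(t) = t^m − a ∈ D[t;σ]`, over a
division ring `D`. -/
def cycMulD (D : Type*) [DivisionRing D] (m : ℕ) (σ : D ≃+* D) (a : D)
    (u v : Fin m → D) : Fin m → D :=
  fun k =>
    (∑ i : Fin m, ∑ j : Fin m,
        if (i : ℕ) + (j : ℕ) = (k : ℕ) then u i * (⇑σ)^[(i : ℕ)] (v j) else 0) +
      ∑ i : Fin m, ∑ j : Fin m,
        if (i : ℕ) + (j : ℕ) = (k : ℕ) + m then
          u i * (⇑σ)^[(i : ℕ)] (v j) * (⇑σ)^[(k : ℕ)] a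
        else 0

/-- `H` is an `F`-automorphism of `S_f`, where `F = C ∩ Fix(σ)` is the set of central
elements of `D` fixed by `σ`. -/
def IsCentAut (D : Type*) [DivisionRing D] (m : ℕ) (σ : D ≃+* D) (a : D)
    (H : (Fin m → D) → (Fin m → D)) : Prop :=
  Function.Bijective H ∧
    (∀ u v, H (u + v) = H u + H v) ∧
    (∀ c : D, c ∈ Subring.center D → σ c = c → ∀ u, H (c • u) = c • H u) ∧
    H (cycOne D m) = cycOne D m ∧
    ∀ u v, H (cycMulD D m σ a u v) = cycMulD D m σ a (H u) (H v)

/-- Let `D` be a division ring with center `C`, `σ` a ring automorphism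
of `D`, `F = C ∩ Fix(σ)`, `m ≥ 2`, `a ∈ D`, and `S_f` the algebra associated with
`f(t) = t^m − a ∈ D[t;σ]`. If `n ≥ 2` divides `m` and `F` contains a primitive `n`-th
root of unity `ω`, then `H_{id,ω} : Σ x_i t^i ↦ Σ x_i ω^i t^i` is an `F`-automorphism of
`S_f` and generates a cyclic subgroup of `Aut_F(S_f)` of order `n`. -/
theorem stmt16 (D : Type*) [DivisionRing D] (σ : D ≃+* D) (m n : ℕ)
    (hm : 2 ≤ m) (hn : 2 ≤ n) (hdvd : n ∣ m) (a : D)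
    (ω : D) (hωC : ω ∈ Subring.center D) (hωfix : σ ω = ω)
    (hω1 : ω ^ n = 1) (hωprim : ∀ l : ℕ, 0 < l → l < n → ω ^ l ≠ 1) :
    IsCentAut D m σ a (fun u i => u i * ω ^ (i : ℕ)) ∧
    (fun u : Fin m → D => fun i => u i * ω ^ (i : ℕ))^[n] = id ∧
    ∀ r : ℕ, 0 < r → r < n →
      (fun u : Fin m → D => fun i => u i * ω ^ (i : ℕ))^[r] ≠ id := by
  have hω0 : ω ≠ 0 := by
    intro h
    rw [h, zero_pow (by omega : n ≠ 0)] at hω1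
    exact zero_ne_one hω1
  have hωm : ω ^ m = 1 := by
    obtain ⟨c, rfl⟩ := hdvd
    rw [pow_mul, hω1, one_pow]
  have hpc : ∀ (x : D) (l : ℕ), ω ^ l * x = x * ω ^ l := by
    intro x l
    exact ((Commute.pow_right (Subring.mem_center_iff.mp hωC x) l)).symm
  have hσω : ∀ i : ℕ, (⇑σ)^[i] ω = ω := by
    intro i
    induction i with
    | zero => rfl
    | succ i ih => rw [Function.iterate_succ_apply', ih, hωfix]
  have hσωp : ∀ i j : ℕ, (⇑σ)^[i] (ω ^ j) = ω ^ j := by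
    intro i j
    induction i with
    | zero => rfl
    | succ i ih => rw [Function.iterate_succ_apply', ih, map_pow, hωfix]
  have hσmul : ∀ (i : ℕ) (x y : D), (⇑σ)^[i] (x * y) = (⇑σ)^[i] x * (⇑σ)^[i] y := by
    intro i
    induction i with
    | zero => intro x y; rfl
    | succ i ih =>
      intro x y
      rw [Function.iterate_succ_apply', Function.iterate_succ_apply',
        Function.iterate_succ_apply', ih, map_mul]
  have key : ∀ (x y : D) (i j : ℕ), x * ω ^ i * (y * ω ^ j) = x * y * ω ^ (i + j) := by
    intro x y i j
    rw [pow_add, mul_assoc x, ← mul_assoc (ω ^ i) y, hpc y i, mul_assoc y, ← mul_assoc x,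
      ← mul_assoc (x * y)]
  have hiter : ∀ (r : ℕ) (u : Fin m → D) (i : Fin m),
      (fun u : Fin m → D => fun i => u i * ω ^ (i : ℕ))^[r] u i = u i * ω ^ ((i : ℕ) * r) := by
    intro r
    induction r with
    | zero => intro u i; simp
    | succ r ih =>
      intro u i
      rw [Function.iterate_succ_apply']
      show (fun u : Fin m → D => fun i => u i * ω ^ (i : ℕ))^[r] u i * ω ^ (i : ℕ) = _
      rw [ih, mul_assoc, ← pow_add, Nat.mul_succ]
  refine ⟨⟨?_, ?_, ?_, ?_, ?_⟩, ?_, ?_⟩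
  · -- bijective
    refine Function.bijective_iff_has_inverse.mpr
      ⟨fun u i => u i * (ω ^ (i : ℕ))⁻¹, fun u => funext fun i => ?_, fun u => funext fun i => ?_⟩
    · exact mul_inv_cancel_right₀ (pow_ne_zero _ hω0) (u i)
    · exact inv_mul_cancel_right₀ (pow_ne_zero _ hω0) (u i)
  · -- additive
    intro u v
    funext i
    show (u i + v i) * ω ^ (i : ℕ) = u i * ω ^ (i : ℕ) + v i * ω ^ (i : ℕ)
    rw [add_mul]
  · -- F-linear
    intro c _ _ u
    funext i
    show (c * u i) * ω ^ (i : ℕ) = c * (u i * ω ^ (i : ℕ))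
    rw [mul_assoc]
  · -- unit
    funext i
    show cycOne D m i * ω ^ (i : ℕ) = cycOne D m i
    unfold cycOne
    split_ifs with h
    · rw [h, pow_zero, one_mul]
    · rw [zero_mul]
  · -- multiplicative
    intro u v
    funext k
    show cycMulD D m σ a u v k * ω ^ (k : ℕ) = _
    unfold cycMulD
    simp only [add_mul, Finset.sum_mul, ite_mul, zero_mul]
    congr 1
    · refine Finset.sum_congr rfl fun i _ => Finset.sum_congr rfl fun j _ => ?_
      split_ifs with h
      · rw [hσmul, hσωp, key, h]
      · rfl
    · refine Finset.sum_congr rfl fun i _ => Finset.sum_congr rfl fun j _ => ?_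
      split_ifs with h
      · rw [hσmul, hσωp, key, h, pow_add, hωm, mul_one, mul_assoc (u i * (⇑σ)^[(i:ℕ)] (v j)),
          ← hpc, ← mul_assoc]
      · rfl
  · -- order n: H^[n] = id
    funext u
    funext i
    rw [hiter, mul_comm (i : ℕ) n, pow_mul, hω1, one_pow, mul_one]
    rfl
  · -- no smaller power is id
    intro r hr hrn hid
    have h1 : (1 : ℕ) < m := by omega
    have := congrFun (congrFun hid (fun _ => 1)) ⟨1, h1⟩
    rw [hiter] at this
    simp only [id_eq, one_mul] at this
    exact hωprim r hr hrn (by simpa using this)
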